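/- Let φ be the PCA-factorised time-discretised Asian average price function, let x ∈ [a,b] with 0 < a ≤ b, and let ξ(x,y) be the unique solution of φ(ξ(x,y),y) = x. Fix q ∈ {0,1}, η ∈ ℕ₀^d, and take θ ≡ 1 or θ = x − φ. Then every admissible function h_{q,η} with data (r, α, β, μ) satisfies the pointwise bound, uniform in y ∈ ℝ^d and x ∈ [a,b]: |h_{q,η}(x,y)| ≤ (max_{β' ≤ |η|+q−1} κ_{β'}) · Ω_q · (2d+3)^{2|η|+2q−1} / [min(σ τ_d (2d+3), 1)]^{|η|+q} · ∏_{i=1}^{d} Λ_i^{η_i}, where Ω_q = 1 if (θ ≡ 1, q = 0) or (θ = x − φ, q = 1), Ω_q = 1/a if (θ ≡ 1, q = 1), and Ω_q = b if (θ = x − φ, q = 0). Consequently sup_{x∈[a,b]} ∫_{ℝ^d} |h_{q,η}(x,y)|² ψ_η(y_η) ρ_{−η}(y_{−η}) dy ≤ B_{q,η}, where B_{q,η} is the square of the displayed pointwise bound, for any weight functions ψ_i with ∫ψ_i = 1. -/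

import Mathlib

open Real Filter MeasureTheory Finset

/-- `τ_d = √(T/((d+1)(2d+3)))`. -/
noncomputable def tau (d : ℕ) (T : ℝ) : ℝ :=
  Real.sqrt (T / (((d : ℝ) + 1) * (2 * (d : ℝ) + 3)))

/-- `χ_i = π(2i+1)/(2(2d+3))`. -/
noncomputable def chi (d i : ℕ) : ℝ := Real.pi * (2 * (i : ℝ) + 1) / (2 * (2 * (d : ℝ) + 3))

/-- Entries of the PCA factor `A`. -/
noncomputable def Amat (d : ℕ) (T : ℝ) (k i : ℕ) : ℝ :=
  tau d T * Real.sin (2 * ((k : ℝ) + 1) * chi d i) / Real.sin (chi d i)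

/-- The PCA-factorised time-discretised Asian average price function. -/
noncomputable def phi (d : ℕ) (S0 R σ T : ℝ) (y : Fin (d + 1) → ℝ) : ℝ :=
  (1 / ((d : ℝ) + 1)) * ∑ k : Fin (d + 1),
    S0 * Real.exp ((R - σ ^ 2 / 2) * ((k : ℝ) + 1) * T / ((d : ℝ) + 1)
      + σ * ∑ i : Fin (d + 1), Amat d T k i * y i)

/-- First-order partial derivative in coordinate `i`. -/
noncomputable def pd (n : ℕ) (i : Fin n) (f : (Fin n → ℝ) → ℝ) : (Fin n → ℝ) → ℝ :=
  fun y => fderiv ℝ f y (Pi.single i 1)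

/-- Mixed partial derivative `D^η = ∏_i ∂^{η_i}/∂y_i^{η_i}`. -/
noncomputable def mderiv {n : ℕ} (η : Fin n → ℕ) (f : (Fin n → ℝ) → ℝ) : (Fin n → ℝ) → ℝ :=
  (List.finRange n).foldr (fun i g => (pd n i)^[η i] g) f

/-- The standard normal probability density `ρ(u) = e^{−u²/2}/√(2π)`. -/
noncomputable def gauss (t : ℝ) : ℝ := Real.exp (-t ^ 2 / 2) / Real.sqrt (2 * Real.pi)

/-- `κ_β = sup_u |ρ^{(β)}(u)|`. -/
noncomputable def kappa (β : ℕ) : ℝ := ⨆ u : ℝ, |iteratedDeriv β gauss u|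

/-- `Λ_i = σ τ_d (2d+3)/(2i+1)`. -/
noncomputable def Lam (d : ℕ) (σ T : ℝ) (i : ℕ) : ℝ :=
  σ * tau d T * (2 * (d : ℝ) + 3) / (2 * (i : ℝ) + 1)

/-- The weight `ψ_η(y_η) ρ_{−η}(y_{−η}) = ∏_{i : η_i ≠ 0} ψ_i(y_i) ∏_{i : η_i = 0} ρ(y_i)`. -/
noncomputable def sobWeight {n : ℕ} (η : Fin n → ℕ) (ψ : Fin n → ℝ → ℝ) (ρ : ℝ → ℝ)
    (y : Fin n → ℝ) : ℝ :=
  ∏ i, if η i = 0 then ρ (y i) else ψ i (y i)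

/-- The constraints on the data `(r, α, β, μ)` of a function of the admissible form
`h_{q,η}`: `α_ℓ ∈ ℕ₀^{d+1} \ {e₀, 0}`, `r ≤ 2|η|+q−1`, `α_{ℓ,0} ≤ |η|+q`,
`β ≤ |η|+q−1`, `|μ| ≤ |η|` and `μ + βe₀ + Σ_ℓ α_ℓ = (r+q−1, η)`. -/
def AdmissibleData (d q : ℕ) (η : Fin d → ℕ) (r : ℕ) (α : Fin r → Fin (d + 1) → ℕ)
    (β : ℕ) (μ : Fin (d + 1) → ℕ) : Prop :=
  (∀ ℓ : Fin r, α ℓ ≠ 0 ∧ α ℓ ≠ Pi.single 0 1) ∧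
  ((r : ℤ) ≤ 2 * ((∑ i, η i : ℕ) : ℤ) + (q : ℤ) - 1) ∧
  (∀ ℓ : Fin r, α ℓ 0 ≤ (∑ i, η i) + q) ∧
  ((β : ℤ) ≤ ((∑ i, η i : ℕ) : ℤ) + (q : ℤ) - 1) ∧
  ((∑ j, μ j) ≤ ∑ i, η i) ∧
  (μ 0 + β + (∑ ℓ, α ℓ 0) + 1 = r + q) ∧
  (∀ i : Fin d, μ i.succ + (∑ ℓ, α ℓ i.succ) = η i)

/-- The admissible form (with `θ` possibly depending on `x`, as for `θ = x − φ`):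
`h(x,y) = (−1)^r D^μθ(ξ(x,y),y) ρ^{(β)}(ξ(x,y)) ∏_ℓ D^{α_ℓ}φ(ξ(x,y),y) / [D⁰φ(ξ(x,y),y)]^{r+q}`. -/
noncomputable def admFun (d : ℕ) (S0 R σ T : ℝ) (q : ℕ)
    (θ : ℝ → (Fin (d + 1) → ℝ) → ℝ) (ξ : ℝ → (Fin d → ℝ) → ℝ)
    (r : ℕ) (α : Fin r → Fin (d + 1) → ℕ) (β : ℕ) (μ : Fin (d + 1) → ℕ)
    (x : ℝ) (y : Fin d → ℝ) : ℝ :=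
  (-1 : ℝ) ^ r * mderiv μ (θ x) (Fin.cons (ξ x y) y) * iteratedDeriv β gauss (ξ x y) *
      (∏ ℓ, mderiv (α ℓ) (phi d S0 R σ T) (Fin.cons (ξ x y) y)) /
    (pd (d + 1) 0 (phi d S0 R σ T) (Fin.cons (ξ x y) y)) ^ (r + q)

section SExp
open Real

noncomputable def lmap {n : ℕ} (w : Fin n → ℝ) : (Fin n → ℝ) →L[ℝ] ℝ :=
  ∑ i, w i • (ContinuousLinearMap.proj i : (Fin n → ℝ) →L[ℝ] ℝ)

lemma lmap_apply {n : ℕ} (w y : Fin n → ℝ) : lmap w y = ∑ i, w i * y i := by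
  simp [lmap]

lemma lmap_single {n : ℕ} (w : Fin n → ℝ) (j : Fin n) : lmap w (Pi.single j 1) = w j := by
  rw [lmap_apply]
  simp [Pi.single_apply]

noncomputable def sExp {n : ℕ} {ι : Type} [Fintype ι] (c : ι → ℝ) (w : ι → Fin n → ℝ) :
    (Fin n → ℝ) → ℝ := fun y => ∑ k, c k * Real.exp (∑ i, w k i * y i)

lemma hasFDerivAt_sExp {n : ℕ} {ι : Type} [Fintype ι] (c : ι → ℝ) (w : ι → Fin n → ℝ)
    (y : Fin n → ℝ) :
    HasFDerivAt (sExp c w)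
      (∑ k, (c k * Real.exp (∑ i, w k i * y i)) • lmap (w k)) y := by
  have h : ∀ k ∈ Finset.univ, HasFDerivAt (fun y : Fin n → ℝ => c k * Real.exp (∑ i, w k i * y i))
      ((c k * Real.exp (∑ i, w k i * y i)) • lmap (w k)) y := by
    intro k _
    have h1 : HasFDerivAt (fun y : Fin n → ℝ => ∑ i, w k i * y i) (lmap (w k)) y := by
      have h0 := (lmap (w k)).hasFDerivAt (x := y)
      have : (fun y : Fin n → ℝ => ∑ i, w k i * y i) = ⇑(lmap (w k)) := by
        funext z; rw [lmap_apply]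
      rw [this]; exact h0
    have h3 := (h1.exp).const_mul (c k)
    simpa [smul_smul, mul_assoc] using h3
  exact HasFDerivAt.fun_sum h

lemma pd_sExp {n : ℕ} {ι : Type} [Fintype ι] (c : ι → ℝ) (w : ι → Fin n → ℝ) (j : Fin n) :
    pd n j (sExp c w) = sExp (fun k => c k * w k j) w := by
  funext y
  have H := hasFDerivAt_sExp c w y
  rw [pd, H.fderiv]
  simp only [ContinuousLinearMap.sum_apply, ContinuousLinearMap.coe_smul', Pi.smul_apply,
    lmap_single, smul_eq_mul, sExp]
  exact Finset.sum_congr rfl fun k _ => by ring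

lemma sExp_congr {n : ℕ} {ι : Type} [Fintype ι] {c c' : ι → ℝ} (w : ι → Fin n → ℝ)
    (h : ∀ k, c k = c' k) : sExp c w = sExp c' w := by
  have : c = c' := funext h
  rw [this]

lemma pd_iter_sExp {n : ℕ} {ι : Type} [Fintype ι] (c : ι → ℝ) (w : ι → Fin n → ℝ) (j : Fin n)
    (m : ℕ) : (pd n j)^[m] (sExp c w) = sExp (fun k => c k * w k j ^ m) w := by
  induction m with
  | zero => simp [sExp]
  | succ m ih =>
      rw [Function.iterate_succ_apply', ih, pd_sExp]
      exact sExp_congr w fun k => by ring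

lemma foldr_sExp {n : ℕ} {ι : Type} [Fintype ι] (η : Fin n → ℕ) (c : ι → ℝ)
    (w : ι → Fin n → ℝ) (l : List (Fin n)) :
    l.foldr (fun i g => (pd n i)^[η i] g) (sExp c w) =
      sExp (fun k => c k * (l.map (fun i => w k i ^ η i)).prod) w := by
  induction l with
  | nil => simp [sExp]
  | cons i t ih =>
      rw [List.foldr_cons, ih, pd_iter_sExp]
      exact sExp_congr w fun k => by simp; ring

lemma mderiv_sExp {n : ℕ} {ι : Type} [Fintype ι] (η : Fin n → ℕ) (c : ι → ℝ)
    (w : ι → Fin n → ℝ) :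
    mderiv η (sExp c w) = sExp (fun k => c k * ∏ i, w k i ^ η i) w := by
  rw [mderiv, foldr_sExp]
  exact sExp_congr w fun k => by rw [Fin.prod_univ_def]

end SExp
section PhiBounds
open Real

lemma tau_pos {d : ℕ} {T : ℝ} (hT : 0 < T) : 0 < tau d T := by
  apply Real.sqrt_pos.mpr
  positivity

lemma chi_pos (d i : ℕ) : 0 < chi d i := by
  unfold chi
  have := Real.pi_pos
  positivity

lemma chi_le (d i : ℕ) (h : i ≤ d + 1) : chi d i ≤ Real.pi / 2 := by
  unfold chi
  rw [div_le_div_iff₀ (by positivity) (by norm_num)]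
  have h' : (i : ℝ) ≤ (d : ℝ) + 1 := by exact_mod_cast h
  nlinarith [Real.pi_pos]

lemma sin_chi_lb (d i : ℕ) (h : i ≤ d + 1) :
    (2 * (i : ℝ) + 1) / (2 * (d : ℝ) + 3) ≤ Real.sin (chi d i) := by
  have j := Real.mul_le_sin (x := chi d i) (chi_pos d i).le (chi_le d i h)
  have : 2 / Real.pi * chi d i = (2 * (i : ℝ) + 1) / (2 * (d : ℝ) + 3) := by
    unfold chi
    field_simp
  linarith [j, this ▸ j]

lemma sin_chi_pos (d i : ℕ) (h : i ≤ d + 1) : 0 < Real.sin (chi d i) := by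
  have := sin_chi_lb d i h
  have h2 : 0 < (2 * (i : ℝ) + 1) / (2 * (d : ℝ) + 3) := by positivity
  linarith

lemma abs_Amat_le (d : ℕ) {T : ℝ} (hT : 0 < T) (k i : ℕ) (hi : i ≤ d + 1) :
    |Amat d T k i| ≤ tau d T * (2 * (d : ℝ) + 3) / (2 * (i : ℝ) + 1) := by
  have hs := sin_chi_pos d i hi
  have hlb := sin_chi_lb d i hi
  have hτ := tau_pos (d := d) hT
  have habs := abs_sin_le_one (2 * ((k : ℝ) + 1) * chi d i)
  have hd3 : (0:ℝ) < 2 * (d : ℝ) + 3 := by positivity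
  have hi1 : (0:ℝ) < 2 * (i : ℝ) + 1 := by positivity
  unfold Amat
  rw [abs_div, abs_mul, abs_of_pos hτ, abs_of_pos hs,
    div_le_div_iff₀ hs hi1]
  have h1 : tau d T * |Real.sin (2 * ((k : ℝ) + 1) * chi d i)| ≤ tau d T := by
    nlinarith [abs_nonneg (Real.sin (2 * ((k : ℝ) + 1) * chi d i))]
  have h2 : (2 * (i : ℝ) + 1) / (2 * (d : ℝ) + 3) * (2 * (d:ℝ) + 3) = 2 * (i:ℝ) + 1 := by
    field_simp
  nlinarith [mul_le_mul_of_nonneg_left hlb (mul_nonneg hτ.le hd3.le),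
    mul_le_mul_of_nonneg_right h1 hi1.le]

lemma Amat_zero_lb (d : ℕ) {T : ℝ} (hT : 0 < T) (k : ℕ) (hk : k ≤ d) :
    tau d T ≤ Amat d T k 0 := by
  have hτ := tau_pos (d := d) hT
  have hs := sin_chi_pos d 0 (by omega)
  have hπ := Real.pi_pos
  have hχ : chi d 0 = Real.pi / (2 * (2 * (d : ℝ) + 3)) := by
    unfold chi; ring_nf
  have harg : 2 * ((k : ℝ) + 1) * chi d 0 = ((k : ℝ) + 1) * Real.pi / (2 * (d : ℝ) + 3) := by
    rw [hχ]; field_simp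
  have hk' : (k : ℝ) ≤ (d : ℝ) := by exact_mod_cast hk
  -- lower bound numerator via Jordan
  have hlb : 2 * ((k : ℝ) + 1) / (2 * (d : ℝ) + 3) ≤ Real.sin (2 * ((k : ℝ) + 1) * chi d 0) := by
    have hc0 := chi_pos d 0
    have hx0 : 0 ≤ 2 * ((k : ℝ) + 1) * chi d 0 := by positivity
    have hx1 : 2 * ((k : ℝ) + 1) * chi d 0 ≤ Real.pi / 2 := by
      rw [harg, div_le_div_iff₀ (by positivity) (by norm_num)]
      nlinarith
    have j := Real.mul_le_sin hx0 hx1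
    have : 2 / Real.pi * (2 * ((k : ℝ) + 1) * chi d 0) = 2 * ((k : ℝ) + 1) / (2 * (d : ℝ) + 3) := by
      rw [hχ]; field_simp
    linarith [this ▸ j]
  -- upper bound denominator
  have hub : Real.sin (chi d 0) ≤ Real.pi / (2 * (2 * (d : ℝ) + 3)) := by
    rw [← hχ]
    exact Real.sin_le (chi_pos d 0).le
  unfold Amat
  have key : 1 ≤ Real.sin (2 * ((k : ℝ) + 1) * chi d 0) / Real.sin (chi d 0) := by
    rw [le_div_iff₀ hs]
    have h4 : 2 * ((k : ℝ) + 1) / (2 * (d : ℝ) + 3) ≥ 2 / (2 * (d : ℝ) + 3) := by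
      apply div_le_div_of_nonneg_right ?_ (by positivity) |>.trans_eq rfl
      linarith
    have hπ4 : Real.pi ≤ 4 := Real.pi_le_four
    calc 1 * Real.sin (chi d 0) ≤ Real.pi / (2 * (2 * (d : ℝ) + 3)) := by
          rw [one_mul]; exact hub
      _ ≤ 2 / (2 * (d : ℝ) + 3) := by
          rw [div_le_div_iff₀ (by positivity) (by positivity)]
          nlinarith
      _ ≤ 2 * ((k : ℝ) + 1) / (2 * (d : ℝ) + 3) := h4
      _ ≤ Real.sin (2 * ((k : ℝ) + 1) * chi d 0) := hlb
  calc tau d T = tau d T * 1 := by ring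
    _ ≤ tau d T * (Real.sin (2 * ((k : ℝ) + 1) * chi d 0) / Real.sin (chi d 0)) := by
        exact mul_le_mul_of_nonneg_left key hτ.le
    _ = tau d T * Real.sin (2 * ((k : ℝ) + 1) * chi d 0) / Real.sin (chi d 0) := by ring

end PhiBounds
section PhiSexp
open Real

noncomputable def phiC (d : ℕ) (S0 R σ T : ℝ) : Fin (d + 1) → ℝ :=
  fun k => S0 / ((d : ℝ) + 1) * Real.exp ((R - σ ^ 2 / 2) * ((k : ℝ) + 1) * T / ((d : ℝ) + 1))

noncomputable def phiW (d : ℕ) (σ T : ℝ) : Fin (d + 1) → Fin (d + 1) → ℝ :=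
  fun k i => σ * Amat d T (k : ℕ) (i : ℕ)

lemma phiC_pos {d : ℕ} {S0 R σ T : ℝ} (hS0 : 0 < S0) (k : Fin (d + 1)) :
    0 < phiC d S0 R σ T k := by
  unfold phiC
  have : (0:ℝ) < (d:ℝ) + 1 := by positivity
  positivity

lemma phi_eq (d : ℕ) (S0 R σ T : ℝ) :
    phi d S0 R σ T = sExp (phiC d S0 R σ T) (phiW d σ T) := by
  funext y
  unfold phi sExp phiC phiW
  rw [Finset.mul_sum]
  refine Finset.sum_congr rfl fun k _ => ?_
  rw [Real.exp_add]
  have h1 : σ * ∑ i : Fin (d+1), Amat d T (k:ℕ) (i:ℕ) * y i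
      = ∑ i : Fin (d+1), σ * Amat d T (k:ℕ) (i:ℕ) * y i := by
    rw [Finset.mul_sum]; exact Finset.sum_congr rfl fun i _ => by ring
  rw [h1]
  ring

lemma phi_pos {d : ℕ} {S0 R σ T : ℝ} (hS0 : 0 < S0) (z : Fin (d + 1) → ℝ) :
    0 < phi d S0 R σ T z := by
  rw [phi_eq]
  unfold sExp
  exact Finset.sum_pos (fun k _ => mul_pos (phiC_pos hS0 k) (Real.exp_pos _))
    ⟨0, Finset.mem_univ 0⟩

lemma abs_phiW_le {d : ℕ} {σ T : ℝ} (hσ : 0 < σ) (hT : 0 < T) (k i : Fin (d + 1)) :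
    |phiW d σ T k i| ≤ Lam d σ T (i : ℕ) := by
  unfold phiW Lam
  rw [abs_mul, abs_of_pos hσ]
  calc σ * |Amat d T (k:ℕ) (i:ℕ)| ≤ σ * (tau d T * (2 * (d : ℝ) + 3) / (2 * ((i:ℕ) : ℝ) + 1)) := by
        apply mul_le_mul_of_nonneg_left ?_ hσ.le
        exact abs_Amat_le d hT (k : ℕ) (i : ℕ) (by omega)
    _ = σ * tau d T * (2 * (d : ℝ) + 3) / (2 * ((i:ℕ) : ℝ) + 1) := by ring

lemma Lam_pos {d : ℕ} {σ T : ℝ} (hσ : 0 < σ) (hT : 0 < T) (i : ℕ) : 0 < Lam d σ T i := by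
  unfold Lam
  have := tau_pos (d := d) hT
  positivity

lemma mderiv_phi (d : ℕ) (S0 R σ T : ℝ) (α : Fin (d + 1) → ℕ) :
    mderiv α (phi d S0 R σ T) =
      sExp (fun k => phiC d S0 R σ T k * ∏ i, phiW d σ T k i ^ α i) (phiW d σ T) := by
  rw [phi_eq, mderiv_sExp]

lemma abs_mderiv_phi_le {d : ℕ} {S0 R σ T : ℝ} (hS0 : 0 < S0) (hσ : 0 < σ) (hT : 0 < T)
    (α : Fin (d + 1) → ℕ) (z : Fin (d + 1) → ℝ) :
    |mderiv α (phi d S0 R σ T) z| ≤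
      (∏ i : Fin (d + 1), Lam d σ T (i : ℕ) ^ α i) * phi d S0 R σ T z := by
  rw [mderiv_phi]
  conv_rhs => rw [phi_eq]
  unfold sExp
  beta_reduce
  calc |∑ k, phiC d S0 R σ T k * (∏ i, phiW d σ T k i ^ α i) * Real.exp (∑ i, phiW d σ T k i * z i)|
      ≤ ∑ k, |phiC d S0 R σ T k * (∏ i, phiW d σ T k i ^ α i) * Real.exp (∑ i, phiW d σ T k i * z i)| :=
        Finset.abs_sum_le_sum_abs _ _
    _ ≤ ∑ k, (∏ i : Fin (d + 1), Lam d σ T (i : ℕ) ^ α i) *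
          (phiC d S0 R σ T k * Real.exp (∑ i, phiW d σ T k i * z i)) := by
        refine Finset.sum_le_sum fun k _ => ?_
        rw [abs_mul, abs_mul, abs_of_pos (phiC_pos hS0 k), abs_of_pos (Real.exp_pos _)]
        have hprod : |∏ i, phiW d σ T k i ^ α i| ≤ ∏ i : Fin (d + 1), Lam d σ T (i : ℕ) ^ α i := by
          rw [abs_prod]
          refine Finset.prod_le_prod (fun i _ => abs_nonneg _) fun i _ => ?_
          rw [abs_pow]
          exact pow_le_pow_left₀ (abs_nonneg _) (abs_phiW_le hσ hT k i) _
        have h1 : 0 ≤ phiC d S0 R σ T k := (phiC_pos hS0 k).le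
        have h2 : 0 ≤ Real.exp (∑ i, phiW d σ T k i * z i) := (Real.exp_pos _).le
        calc phiC d S0 R σ T k * |∏ i, phiW d σ T k i ^ α i| * Real.exp (∑ i, phiW d σ T k i * z i)
            ≤ phiC d S0 R σ T k * (∏ i : Fin (d + 1), Lam d σ T (i : ℕ) ^ α i) *
              Real.exp (∑ i, phiW d σ T k i * z i) := by
              apply mul_le_mul_of_nonneg_right (mul_le_mul_of_nonneg_left hprod h1) h2
          _ = (∏ i : Fin (d + 1), Lam d σ T (i : ℕ) ^ α i) *
              (phiC d S0 R σ T k * Real.exp (∑ i, phiW d σ T k i * z i)) := by ring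
    _ = (∏ i : Fin (d + 1), Lam d σ T (i : ℕ) ^ α i) *
          ∑ k, phiC d S0 R σ T k * Real.exp (∑ i, phiW d σ T k i * z i) := by
        rw [Finset.mul_sum]

lemma pd0_phi_lb {d : ℕ} {S0 R σ T : ℝ} (hS0 : 0 < S0) (hσ : 0 < σ) (hT : 0 < T)
    (z : Fin (d + 1) → ℝ) :
    σ * tau d T * phi d S0 R σ T z ≤ pd (d + 1) 0 (phi d S0 R σ T) z := by
  have : pd (d + 1) 0 (phi d S0 R σ T) = sExp (fun k => phiC d S0 R σ T k * phiW d σ T k 0)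
      (phiW d σ T) := by
    rw [phi_eq, pd_sExp]
  rw [this]
  conv_lhs => rw [phi_eq]
  unfold sExp
  rw [Finset.mul_sum]
  refine Finset.sum_le_sum fun k _ => ?_
  have hA : tau d T ≤ Amat d T (k : ℕ) 0 := Amat_zero_lb d hT (k : ℕ) (by omega)
  have h1 : σ * tau d T ≤ phiW d σ T k 0 := by
    unfold phiW
    have : ((0 : Fin (d+1)) : ℕ) = 0 := rfl
    rw [this]
    exact mul_le_mul_of_nonneg_left hA hσ.le
  have h2 : 0 ≤ phiC d S0 R σ T k * Real.exp (∑ i, phiW d σ T k i * z i) :=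
    mul_nonneg (phiC_pos hS0 k).le (Real.exp_pos _).le
  calc σ * tau d T * (phiC d S0 R σ T k * Real.exp (∑ i, phiW d σ T k i * z i))
      ≤ phiW d σ T k 0 * (phiC d S0 R σ T k * Real.exp (∑ i, phiW d σ T k i * z i)) :=
        mul_le_mul_of_nonneg_right h1 h2
    _ = phiC d S0 R σ T k * phiW d σ T k 0 * Real.exp (∑ i, phiW d σ T k i * z i) := by ring

lemma pd0_phi_pos {d : ℕ} {S0 R σ T : ℝ} (hS0 : 0 < S0) (hσ : 0 < σ) (hT : 0 < T)
    (z : Fin (d + 1) → ℝ) : 0 < pd (d + 1) 0 (phi d S0 R σ T) z := by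
  have h1 := pd0_phi_lb (R := R) hS0 hσ hT z
  have h2 : 0 < σ * tau d T * phi d S0 R σ T z := by
    have := tau_pos (d := d) hT
    have := phi_pos (R := R) (σ := σ) (T := T) hS0 z
    positivity
  linarith

end PhiSexp
section Kappa
open Real Polynomial

lemma pow_mul_exp_neg_sq_le (k : ℕ) (u : ℝ) :
    |u| ^ k * Real.exp (-(u ^ 2 / 2)) ≤ 2 ^ k * (Nat.factorial k : ℝ) := by
  have hfac : (1:ℝ) ≤ (Nat.factorial k : ℝ) := by
    exact_mod_cast Nat.one_le_iff_ne_zero.mpr (Nat.factorial_ne_zero k)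
  have h2k : (1:ℝ) ≤ 2 ^ k := one_le_pow₀ (by norm_num)
  rcases le_or_gt (|u|) 1 with h | h
  · have h1 : |u| ^ k ≤ 1 := pow_le_one₀ (abs_nonneg u) h
    have h2 : Real.exp (-(u ^ 2 / 2)) ≤ 1 := Real.exp_le_one_iff.mpr (by nlinarith [sq_nonneg u])
    nlinarith [pow_nonneg (abs_nonneg u) k, Real.exp_pos (-(u ^ 2 / 2))]
  · have h0 : 0 ≤ u ^ 2 / 2 := by positivity
    have hp := Real.pow_div_factorial_le_exp (u ^ 2 / 2) h0 k
    -- (u^2/2)^k / k! ≤ exp (u^2/2)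
    have hexp : Real.exp (-(u ^ 2 / 2)) = (Real.exp (u ^ 2 / 2))⁻¹ := by
      rw [← Real.exp_neg]
    have hepos := Real.exp_pos (u ^ 2 / 2)
    have huk : |u| ^ k ≤ (u ^ 2) ^ k := by
      calc |u| ^ k ≤ (|u| ^ 2) ^ k := by
            apply pow_le_pow_left₀ (abs_nonneg u)
            nlinarith
        _ = (u ^ 2) ^ k := by rw [sq_abs]
    have key : (u ^ 2) ^ k ≤ 2 ^ k * (Nat.factorial k : ℝ) * Real.exp (u ^ 2 / 2) := by
      have : (u ^ 2 / 2) ^ k = (u ^ 2) ^ k / 2 ^ k := by rw [div_pow]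
      rw [this] at hp
      have hfk : (0:ℝ) < (Nat.factorial k : ℝ) := by positivity
      rw [div_div, div_le_iff₀ (by positivity)] at hp
      nlinarith
    calc |u| ^ k * Real.exp (-(u ^ 2 / 2)) ≤ (u ^ 2) ^ k * Real.exp (-(u ^ 2 / 2)) := by
          apply mul_le_mul_of_nonneg_right huk (Real.exp_pos _).le
      _ ≤ 2 ^ k * (Nat.factorial k : ℝ) * Real.exp (u ^ 2 / 2) * Real.exp (-(u ^ 2 / 2)) := by
          apply mul_le_mul_of_nonneg_right key (Real.exp_pos _).le
      _ = 2 ^ k * (Nat.factorial k : ℝ) := by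
          rw [mul_assoc, ← Real.exp_add]
          simp

lemma poly_gauss_bound (p : ℝ[X]) : ∃ C : ℝ, ∀ u : ℝ,
    |p.eval u| * Real.exp (-(u ^ 2 / 2)) ≤ C := by
  refine ⟨∑ k ∈ Finset.range (p.natDegree + 1), |p.coeff k| * (2 ^ k * (Nat.factorial k : ℝ)), fun u => ?_⟩
  have h1 : |p.eval u| ≤ ∑ k ∈ Finset.range (p.natDegree + 1), |p.coeff k| * |u| ^ k := by
    rw [Polynomial.eval_eq_sum_range]
    refine (Finset.abs_sum_le_sum_abs _ _).trans (le_of_eq ?_)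
    exact Finset.sum_congr rfl fun k _ => by rw [abs_mul, abs_pow]
  have h2 : |p.eval u| * Real.exp (-(u ^ 2 / 2)) ≤
      ∑ k ∈ Finset.range (p.natDegree + 1), |p.coeff k| * |u| ^ k * Real.exp (-(u ^ 2 / 2)) := by
    rw [← Finset.sum_mul]
    exact mul_le_mul_of_nonneg_right h1 (Real.exp_pos _).le
  refine h2.trans (Finset.sum_le_sum fun k _ => ?_)
  rw [mul_assoc]
  exact mul_le_mul_of_nonneg_left (pow_mul_exp_neg_sq_le k u) (abs_nonneg _)

lemma gauss_eq : gauss = fun t => (Real.sqrt (2 * Real.pi))⁻¹ * Real.exp (-(t ^ 2 / 2)) := by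
  funext t
  rw [gauss, neg_div, div_eq_inv_mul]

lemma contDiff_expNegSq : ContDiff ℝ (⊤ : ℕ∞) (fun t : ℝ => Real.exp (-(t ^ 2 / 2))) := by
  exact Real.contDiff_exp.comp (((contDiff_id.pow 2).div_const 2).neg)

lemma iterate_deriv_const_mul (C : ℝ) (n : ℕ) : ∀ f : ℝ → ℝ,
    deriv^[n] (fun t => C * f t) = fun u => C * deriv^[n] f u := by
  induction n with
  | zero => intro f; rfl
  | succ n ih =>
      intro f
      rw [Function.iterate_succ_apply, Function.iterate_succ_apply]
      have h : deriv (fun t => C * f t) = fun t => C * deriv f t := by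
        funext t; exact deriv_const_mul_field C
      rw [h, ih]

lemma iteratedDeriv_gauss (n : ℕ) (u : ℝ) :
    iteratedDeriv n gauss u = (Real.sqrt (2 * Real.pi))⁻¹ *
      ((-1 : ℝ) ^ n * Polynomial.aeval u (Polynomial.hermite n) * Real.exp (-(u ^ 2 / 2))) := by
  rw [gauss_eq, iteratedDeriv_eq_iterate, iterate_deriv_const_mul]
  beta_reduce
  rw [Polynomial.deriv_gaussian_eq_hermite_mul_gaussian]

lemma gauss_deriv_bound (n : ℕ) : ∃ C : ℝ, ∀ u : ℝ, |iteratedDeriv n gauss u| ≤ C := by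
  obtain ⟨C, hC⟩ := poly_gauss_bound ((Polynomial.hermite n).map (algebraMap ℤ ℝ))
  refine ⟨(Real.sqrt (2 * Real.pi))⁻¹ * C, fun u => ?_⟩
  rw [iteratedDeriv_gauss]
  have h0 : (0:ℝ) ≤ (Real.sqrt (2 * Real.pi))⁻¹ := by positivity
  rw [abs_mul, abs_of_nonneg h0, abs_mul, abs_mul, abs_pow, abs_neg, abs_one, one_pow, one_mul,
    abs_of_pos (Real.exp_pos _)]
  apply mul_le_mul_of_nonneg_left ?_ h0
  have haev : Polynomial.aeval u (Polynomial.hermite n)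
      = ((Polynomial.hermite n).map (algebraMap ℤ ℝ)).eval u := by
    rw [Polynomial.aeval_def, Polynomial.eval_map]
  rw [haev]
  exact hC u

lemma kappa_bddAbove (n : ℕ) : BddAbove (Set.range fun u : ℝ => |iteratedDeriv n gauss u|) := by
  obtain ⟨C, hC⟩ := gauss_deriv_bound n
  exact ⟨C, by rintro _ ⟨u, rfl⟩; exact hC u⟩

lemma abs_le_kappa (n : ℕ) (u : ℝ) : |iteratedDeriv n gauss u| ≤ kappa n :=
  le_ciSup (kappa_bddAbove n) u

lemma kappa_nonneg (n : ℕ) : 0 ≤ kappa n := (abs_nonneg _).trans (abs_le_kappa n 0)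

lemma kappa_le_biSup {N : ℕ} {β : ℕ} (hβ : β ∈ Finset.range N) :
    kappa β ≤ ⨆ β' ∈ Finset.range N, kappa β' := by
  have hbdd : BddAbove (Set.range fun β' : ℕ => ⨆ _ : β' ∈ Finset.range N, kappa β') := by
    refine ⟨∑ j ∈ Finset.range N, kappa j, ?_⟩
    rintro _ ⟨β', rfl⟩
    show (⨆ _ : β' ∈ Finset.range N, kappa β') ≤ ∑ j ∈ Finset.range N, kappa j
    by_cases h : β' ∈ Finset.range N
    · rw [ciSup_pos h]
      exact Finset.single_le_sum (fun j _ => kappa_nonneg j) h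
    · haveI : IsEmpty (β' ∈ Finset.range N) := ⟨h⟩
      rw [Real.iSup_of_isEmpty]
      exact Finset.sum_nonneg fun j _ => kappa_nonneg j
  calc kappa β = ⨆ _ : β ∈ Finset.range N, kappa β := by rw [ciSup_pos hβ]
    _ ≤ ⨆ β' ∈ Finset.range N, kappa β' := le_ciSup hbdd β

end Kappa
section Core
open Real

lemma key_ineq (κ K P στ D3 Ω Pr : ℝ) (e q r s β N Z : ℕ)
    (hκ0 : 0 ≤ κ) (hκK : κ ≤ K) (hP : 0 < P) (hστ : 0 < στ) (hD3 : 1 ≤ D3) (hPr : 0 ≤ Pr)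
    (hΩ0 : 0 ≤ Ω)
    (hs : s + (β + 1) = r + q) (hβN : β + 1 ≤ N) (hrqZ : r + q ≤ Z)
    (hPe : P ^ e / P ^ q ≤ Ω) :
    κ * P ^ e * P ^ r * (στ * D3) ^ s * Pr / (στ * P) ^ (r + q) ≤
      K * Ω * D3 ^ Z / (min (στ * D3) 1) ^ N * Pr := by
  have hD30 : (0:ℝ) < D3 := lt_of_lt_of_le one_pos hD3
  have hLpos : 0 < στ * D3 := by positivity
  have hm : 0 < min (στ * D3) 1 := lt_min hLpos one_pos
  have hm1 : min (στ * D3) 1 ≤ 1 := min_le_right _ _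
  have hmL : min (στ * D3) 1 ≤ στ * D3 := min_le_left _ _
  have e0 : στ ^ (r + q) = στ ^ s * στ ^ (β + 1) := by rw [← hs, pow_add]
  have e1 : (στ * P) ^ (r + q) = στ ^ s * στ ^ (β + 1) * (P ^ r * P ^ q) := by
    rw [mul_pow, e0, pow_add P r q]
  have e2 : D3 ^ (r + q) = D3 ^ s * D3 ^ (β + 1) := by rw [← hs, pow_add]
  have e3 : (στ * D3) ^ s = στ ^ s * D3 ^ s := mul_pow _ _ _
  have e4 : (στ * D3) ^ (β + 1) = στ ^ (β + 1) * D3 ^ (β + 1) := mul_pow _ _ _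
  have hEq : κ * P ^ e * P ^ r * (στ * D3) ^ s * Pr / (στ * P) ^ (r + q)
      = κ * (P ^ e / P ^ q) * D3 ^ (r + q) * Pr / (στ * D3) ^ (β + 1) := by
    rw [e1, e2, e3, e4]
    field_simp
  rw [hEq]
  have hK0 : 0 ≤ K := hκ0.trans hκK
  have hPe0 : 0 ≤ P ^ e / P ^ q := by positivity
  have h_ac : κ * (P ^ e / P ^ q) * D3 ^ (r + q) * Pr ≤ K * Ω * D3 ^ Z * Pr := by
    apply mul_le_mul_of_nonneg_right ?_ hPr
    apply mul_le_mul ?_ (pow_le_pow_right₀ hD3 hrqZ) (by positivity) (mul_nonneg hK0 hΩ0)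
    exact mul_le_mul hκK hPe hPe0 hK0
  have hmN : min (στ * D3) 1 ^ N ≤ (στ * D3) ^ (β + 1) := by
    calc min (στ * D3) 1 ^ N ≤ min (στ * D3) 1 ^ (β + 1) :=
          pow_le_pow_of_le_one hm.le hm1 hβN
      _ ≤ (στ * D3) ^ (β + 1) := pow_le_pow_left₀ hm.le hmL _
  calc κ * (P ^ e / P ^ q) * D3 ^ (r + q) * Pr / (στ * D3) ^ (β + 1)
      ≤ K * Ω * D3 ^ Z * Pr / min (στ * D3) 1 ^ N := by
        apply div_le_div₀ (by positivity) h_ac (by positivity) hmN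
    _ = K * Ω * D3 ^ Z / min (στ * D3) 1 ^ N * Pr := by ring

lemma foldr_keep {a b : Type} (l : List a) (f : b) : List.foldr (fun _ g => g) f l = f := by
  induction l with
  | nil => rfl
  | cons _ t ih => simpa using ih

lemma mderiv_zero {n : ℕ} (f : (Fin n → ℝ) → ℝ) : mderiv (fun _ => 0) f = f := by
  unfold mderiv
  simp only [Function.iterate_zero]
  exact foldr_keep _ _

lemma mderiv_one {n : ℕ} (μ : Fin n → ℕ) :
    mderiv μ (fun _ : Fin n → ℝ => (1:ℝ)) = fun _ => ∏ i, (0:ℝ) ^ μ i := by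
  have h : (fun _ : Fin n → ℝ => (1:ℝ)) = sExp (ι := Fin 1) (fun _ => 1) (fun _ _ => 0) := by
    funext z; simp [sExp]
  rw [h, mderiv_sExp]
  funext z; simp [sExp]

lemma mderiv_xsubphi (d : ℕ) (S0 R σ T x : ℝ) (μ : Fin (d + 1) → ℕ) :
    mderiv μ (fun z => x - phi d S0 R σ T z) =
      fun z => x * ∏ i, (0:ℝ) ^ μ i - mderiv μ (phi d S0 R σ T) z := by
  have h : (fun z => x - phi d S0 R σ T z)
      = sExp (ι := Fin (d + 2)) (Fin.cons x (fun k => - phiC d S0 R σ T k))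
          (Fin.cons 0 (phiW d σ T)) := by
    funext z
    rw [phi_eq]
    show x - sExp (phiC d S0 R σ T) (phiW d σ T) z = _
    unfold sExp
    conv_rhs => rw [Fin.sum_univ_succ]
    simp only [Fin.cons_zero, Fin.cons_succ, Pi.zero_apply, zero_mul, Finset.sum_const_zero,
      Real.exp_zero, mul_one, neg_mul]
    rw [sub_eq_add_neg, ← Finset.sum_neg_distrib]
  rw [h, mderiv_sExp, mderiv_phi]
  funext z
  unfold sExp
  conv_lhs => rw [Fin.sum_univ_succ]
  simp only [Fin.cons_zero, Fin.cons_succ, Pi.zero_apply, zero_mul, Finset.sum_const_zero,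
    Real.exp_zero, mul_one, neg_mul]
  rw [sub_eq_add_neg, ← Finset.sum_neg_distrib]

end Core
section CoreBound
open Real

lemma Lam_zero (d : ℕ) (σ T : ℝ) : Lam d σ T 0 = σ * tau d T * (2 * (d:ℝ) + 3) := by
  unfold Lam
  norm_num

lemma core_bound (d : ℕ) (S0 R σ T : ℝ) (hS0 : 0 < S0) (hσ : 0 < σ) (hT : 0 < T)
    (q r : ℕ) (α : Fin r → Fin (d + 1) → ℕ) (β : ℕ) (μ : Fin (d + 1) → ℕ) (η : Fin d → ℕ)
    (hα0 : μ 0 + β + (∑ ℓ, α ℓ 0) + 1 = r + q)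
    (hαi : ∀ i : Fin d, μ i.succ + (∑ ℓ, α ℓ i.succ) = η i)
    (K Ω : ℝ) (hκK : kappa β ≤ K) (hΩ0 : 0 ≤ Ω)
    (N Z : ℕ) (hβN : β + 1 ≤ N) (hrqZ : r + q ≤ Z)
    (z : Fin (d + 1) → ℝ) (u : ℝ) (Θ : ℝ) (e : ℕ)
    (hΘ : |Θ| ≤ phi d S0 R σ T z ^ e * ∏ i : Fin (d + 1), Lam d σ T (i : ℕ) ^ μ i)
    (hPe : phi d S0 R σ T z ^ e / phi d S0 R σ T z ^ q ≤ Ω) :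
    |(-1:ℝ) ^ r * Θ * iteratedDeriv β gauss u *
        (∏ ℓ, mderiv (α ℓ) (phi d S0 R σ T) z) /
      (pd (d + 1) 0 (phi d S0 R σ T) z) ^ (r + q)| ≤
      K * Ω * (2 * (d:ℝ) + 3) ^ Z / (min (σ * tau d T * (2 * (d:ℝ) + 3)) 1) ^ N *
        ∏ i : Fin d, Lam d σ T ((i : ℕ) + 1) ^ η i := by
  set P := phi d S0 R σ T z with hPdef
  have hP : 0 < P := phi_pos hS0 z
  have hστ : 0 < σ * tau d T := by
    have := tau_pos (d := d) hT
    positivity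
  have hD3 : (1:ℝ) ≤ 2 * (d:ℝ) + 3 := by
    have : (0:ℝ) ≤ (d:ℝ) := Nat.cast_nonneg d
    linarith
  set s := μ 0 + ∑ ℓ, α ℓ 0 with hsdef
  have hs : s + (β + 1) = r + q := by omega
  -- Λ notation
  set Λ : Fin (d + 1) → ℝ := fun i => Lam d σ T (i : ℕ) with hΛ
  have hΛpos : ∀ i, 0 < Λ i := fun i => Lam_pos hσ hT _
  -- numerator bound
  have hG : |iteratedDeriv β gauss u| ≤ kappa β := abs_le_kappa β u
  have hprod : |∏ ℓ, mderiv (α ℓ) (phi d S0 R σ T) z| ≤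
      ∏ ℓ, ((∏ i : Fin (d + 1), Λ i ^ α ℓ i) * P) := by
    rw [abs_prod]
    exact Finset.prod_le_prod (fun ℓ _ => abs_nonneg _)
      (fun ℓ _ => abs_mderiv_phi_le hS0 hσ hT (α ℓ) z)
  have hprodeq : (∏ ℓ, ((∏ i : Fin (d + 1), Λ i ^ α ℓ i) * P)) =
      P ^ r * ∏ i : Fin (d + 1), Λ i ^ (∑ ℓ, α ℓ i) := by
    rw [Finset.prod_mul_distrib, Finset.prod_const, Finset.card_univ, Fintype.card_fin]
    rw [Finset.prod_comm]
    rw [mul_comm]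
    congr 1
    exact Finset.prod_congr rfl fun i _ => Finset.prod_pow_eq_pow_sum _ _ _
  have hcoe0 : ((0 : Fin (d + 1)) : ℕ) = 0 := rfl
  have hΛ0 : Λ 0 = σ * tau d T * (2 * (d:ℝ) + 3) := by
    rw [hΛ]; beta_reduce; rw [hcoe0, Lam_zero]
  set Pe2 := ∏ i : Fin d, Lam d σ T ((i : ℕ) + 1) ^ η i with hPe2
  have hPe20 : 0 ≤ Pe2 :=
    Finset.prod_nonneg fun i _ => pow_nonneg (Lam_pos hσ hT _).le _
  have hsplit : (∏ i : Fin (d + 1), Λ i ^ μ i) * ∏ i : Fin (d + 1), Λ i ^ (∑ ℓ, α ℓ i)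
      = Λ 0 ^ s * Pe2 := by
    rw [← Finset.prod_mul_distrib]
    have : ∀ i : Fin (d + 1), Λ i ^ μ i * Λ i ^ (∑ ℓ, α ℓ i) = Λ i ^ (μ i + ∑ ℓ, α ℓ i) :=
      fun i => (pow_add _ _ _).symm
    rw [Finset.prod_congr rfl fun i _ => this i, Fin.prod_univ_succ]
    congr 1
    refine Finset.prod_congr rfl fun j _ => ?_
    rw [hαi j, hΛ]
    beta_reduce
    rw [Fin.val_succ]
  -- numerator bound
  set G := iteratedDeriv β gauss u with hG2
  set Q := ∏ ℓ, mderiv (α ℓ) (phi d S0 R σ T) z with hQ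
  have habs : |(-1:ℝ) ^ r * Θ * G * Q| = |Θ| * |G| * |Q| := by
    rw [abs_mul, abs_mul, abs_mul, abs_pow, abs_neg, abs_one, one_pow, one_mul]
  have hκ0 : (0:ℝ) ≤ kappa β := kappa_nonneg β
  have hnum : |Θ| * |G| * |Q| ≤
      kappa β * P ^ e * P ^ r * (σ * tau d T * (2 * (d:ℝ) + 3)) ^ s * Pe2 := by
    have h1 : |Θ| * |G| ≤ (P ^ e * ∏ i : Fin (d + 1), Λ i ^ μ i) * kappa β :=
      mul_le_mul hΘ (abs_le_kappa β u) (abs_nonneg _)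
        (mul_nonneg (pow_nonneg hP.le _)
          (Finset.prod_nonneg fun i _ => pow_nonneg (hΛpos i).le _))
    have h2 : |Q| ≤ P ^ r * ∏ i : Fin (d + 1), Λ i ^ (∑ ℓ, α ℓ i) := hprod.trans_eq hprodeq
    calc |Θ| * |G| * |Q| ≤
        ((P ^ e * ∏ i : Fin (d + 1), Λ i ^ μ i) * kappa β) *
          (P ^ r * ∏ i : Fin (d + 1), Λ i ^ (∑ ℓ, α ℓ i)) := by
          apply mul_le_mul h1 h2 (abs_nonneg _)
          apply mul_nonneg (mul_nonneg (pow_nonneg hP.le _)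
            (Finset.prod_nonneg fun i _ => pow_nonneg (hΛpos i).le _)) hκ0
      _ = kappa β * P ^ e * P ^ r *
            ((∏ i : Fin (d + 1), Λ i ^ μ i) * ∏ i : Fin (d + 1), Λ i ^ (∑ ℓ, α ℓ i)) := by
          ring
      _ = kappa β * P ^ e * P ^ r * (σ * tau d T * (2 * (d:ℝ) + 3)) ^ s * Pe2 := by
          rw [hsplit, hΛ0]; ring
  -- denominator
  have hpd := pd0_phi_lb (R := R) hS0 hσ hT z
  have hpdpos := pd0_phi_pos (R := R) hS0 hσ hT z
  have hden_lb : (σ * tau d T * P) ^ (r + q) ≤ (pd (d + 1) 0 (phi d S0 R σ T) z) ^ (r + q) :=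
    pow_le_pow_left₀ (by positivity) hpd _
  have habsle : |(-1:ℝ) ^ r * Θ * G * Q / (pd (d + 1) 0 (phi d S0 R σ T) z) ^ (r + q)| ≤
      kappa β * P ^ e * P ^ r * (σ * tau d T * (2 * (d:ℝ) + 3)) ^ s * Pe2 /
        (σ * tau d T * P) ^ (r + q) := by
    rw [abs_div, abs_of_pos (pow_pos hpdpos _)]
    apply div_le_div₀ ?_ (habs.le.trans hnum) (by positivity) hden_lb
    exact (abs_nonneg ((-1:ℝ) ^ r * Θ * G * Q)).trans (habs.le.trans hnum)
  refine habsle.trans ?_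
  exact key_ineq (kappa β) K P (σ * tau d T) (2 * (d:ℝ) + 3) Ω Pe2 e q r s β N Z
    hκ0 hκK hP hστ hD3 hPe20 hΩ0 hs hβN hrqZ hPe

end CoreBound
section IntegralPart
open Real MeasureTheory

lemma gauss_nonneg (t : ℝ) : 0 ≤ gauss t := by
  unfold gauss
  positivity

lemma gauss_eq2 : gauss = fun t => Real.exp (-(1/2 : ℝ) * t ^ 2) / Real.sqrt (2 * Real.pi) := by
  funext t
  unfold gauss
  congr 1
  ring_nf

lemma gauss_integrable : Integrable gauss := by
  rw [gauss_eq2]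
  exact (integrable_exp_neg_mul_sq (by norm_num : (0:ℝ) < 1/2)).div_const _

lemma gauss_integral : ∫ t : ℝ, gauss t = 1 := by
  rw [gauss_eq2]
  have h := integral_gaussian (1/2 : ℝ)
  have hs : Real.sqrt (Real.pi / (1/2)) = Real.sqrt (2 * Real.pi) := by
    congr 1; ring
  rw [integral_div, h, hs, div_self]
  have : (0:ℝ) < Real.sqrt (2 * Real.pi) := Real.sqrt_pos.mpr (by positivity)
  exact this.ne'

lemma integral_bound {d : ℕ} (η : Fin d → ℕ) (ψ : Fin d → ℝ → ℝ)
    (hψpos : ∀ i t, 0 ≤ ψ i t) (hψ1 : ∀ i, ∫ t : ℝ, ψ i t = 1)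
    (h : (Fin d → ℝ) → ℝ) (M : ℝ) (hb : ∀ y, |h y| ≤ M) :
    ∫ y : Fin d → ℝ, h y ^ 2 * sobWeight η ψ gauss y ≤ M ^ 2 := by
  set F : Fin d → ℝ → ℝ := fun i => if η i = 0 then gauss else ψ i with hF
  have hsw : ∀ y : Fin d → ℝ, sobWeight η ψ gauss y = ∏ i, F i (y i) := by
    intro y
    unfold sobWeight
    refine Finset.prod_congr rfl fun i _ => ?_
    by_cases hi : η i = 0 <;> simp [hF, hi]
  have hFint : ∀ i, Integrable (F i) := by
    intro i
    by_cases hi : η i = 0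
    · simp only [hF, hi, if_true]
      exact gauss_integrable
    · simp only [hF, hi, if_false]
      by_contra hcon
      have h1 := hψ1 i
      rw [integral_undef hcon] at h1
      exact one_ne_zero h1.symm
  have hFnn : ∀ i t, 0 ≤ F i t := by
    intro i t
    by_cases hi : η i = 0 <;> simp [hF, hi, gauss_nonneg, hψpos]
  have hFone : ∀ i, ∫ t : ℝ, F i t = 1 := by
    intro i
    by_cases hi : η i = 0 <;> simp [hF, hi, gauss_integral, hψ1]
  have hwint : Integrable (fun y : Fin d → ℝ => ∏ i, F i (y i)) :=
    Integrable.fintype_prod hFint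
  have hwval : ∫ y : Fin d → ℝ, ∏ i, F i (y i) = 1 := by
    rw [integral_fintype_prod_volume_eq_prod]
    exact Finset.prod_eq_one fun i _ => hFone i
  have hwnn : ∀ y : Fin d → ℝ, 0 ≤ ∏ i, F i (y i) :=
    fun y => Finset.prod_nonneg fun i _ => hFnn i (y i)
  simp only [hsw]
  calc ∫ y : Fin d → ℝ, h y ^ 2 * ∏ i, F i (y i)
      ≤ ∫ y : Fin d → ℝ, M ^ 2 * ∏ i, F i (y i) := by
        apply integral_mono_of_nonneg
        · exact Filter.Eventually.of_forall fun y => mul_nonneg (sq_nonneg _) (hwnn y)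
        · exact hwint.const_mul _
        · refine Filter.Eventually.of_forall fun y => ?_
          apply mul_le_mul_of_nonneg_right ?_ (hwnn y)
          calc h y ^ 2 = |h y| ^ 2 := (sq_abs _).symm
            _ ≤ M ^ 2 := pow_le_pow_left₀ (abs_nonneg _) (hb y) 2
    _ = M ^ 2 := by rw [integral_const_mul, hwval, mul_one]

end IntegralPart
lemma mderiv_zero' {n : ℕ} (f : (Fin n → ℝ) → ℝ) : mderiv (0 : Fin n → ℕ) f = f :=
  mderiv_zero f
/-- pointwise bound, uniform in `y ∈ ℝ^d` and `x ∈ [a,b]`, for admissible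
functions `h_{q,η}` built from the PCA-factorised Asian `φ` with `θ ≡ 1` or `θ = x − φ`,
and the resulting bound `B_{q,η}` on the weighted integrals. -/
theorem stmt19 (d : ℕ) (hd : 1 ≤ d) (S0 R σ T : ℝ) (hS0 : 0 < S0) (hσ : 0 < σ) (hT : 0 < T)
    (a b : ℝ) (ha : 0 < a) (hab : a ≤ b)
    -- the implicit function ξ:
    (ξ : ℝ → (Fin d → ℝ) → ℝ)
    (hξ : ∀ x ∈ Set.Icc a b, ∀ y : Fin d → ℝ, phi d S0 R σ T (Fin.cons (ξ x y) y) = x)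
    -- q ∈ {0,1}, η, and admissible data:
    (q : ℕ) (hq : q ∈ ({0, 1} : Set ℕ)) (η : Fin d → ℕ)
    (r : ℕ) (α : Fin r → Fin (d + 1) → ℕ) (β : ℕ) (μ : Fin (d + 1) → ℕ)
    (hdata : AdmissibleData d q η r α β μ)
    -- θ ≡ 1 or θ = x − φ, with the corresponding constant Ω_q:
    (θ : ℝ → (Fin (d + 1) → ℝ) → ℝ) (Ω : ℝ)
    (hcase : ((∀ (x : ℝ) (z : Fin (d + 1) → ℝ), θ x z = 1) ∧
               Ω = (if q = 0 then 1 else 1 / a)) ∨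
             ((∀ (x : ℝ) (z : Fin (d + 1) → ℝ), θ x z = x - phi d S0 R σ T z) ∧
               Ω = (if q = 0 then b else 1)))
    -- weight functions with ∫ψ_i = 1:
    (ψ : Fin d → ℝ → ℝ) (hψpos : ∀ (i : Fin d) (t : ℝ), 0 ≤ ψ i t)
    (hψ1 : ∀ i : Fin d, ∫ t : ℝ, ψ i t = 1) :
    (∀ x ∈ Set.Icc a b, ∀ y : Fin d → ℝ,
      |admFun d S0 R σ T q θ ξ r α β μ x y| ≤
        (⨆ β' ∈ Finset.range ((∑ i, η i) + q), kappa β') * Ω *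
            (2 * (d : ℝ) + 3) ^ (2 * ((∑ i, η i : ℕ) : ℤ) + 2 * (q : ℤ) - 1) /
            (min (σ * tau d T * (2 * (d : ℝ) + 3)) 1) ^ ((∑ i, η i) + q) *
          ∏ i : Fin d, Lam d σ T ((i : ℕ) + 1) ^ η i) ∧
    (∀ x ∈ Set.Icc a b,
      ∫ y : Fin d → ℝ, (admFun d S0 R σ T q θ ξ r α β μ x y) ^ 2 * sobWeight η ψ gauss y ≤
        ((⨆ β' ∈ Finset.range ((∑ i, η i) + q), kappa β') * Ω *
            (2 * (d : ℝ) + 3) ^ (2 * ((∑ i, η i : ℕ) : ℤ) + 2 * (q : ℤ) - 1) /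
            (min (σ * tau d T * (2 * (d : ℝ) + 3)) 1) ^ ((∑ i, η i) + q) *
          ∏ i : Fin d, Lam d σ T ((i : ℕ) + 1) ^ η i) ^ 2) := by
  obtain ⟨hαne, hr2, hα0le, hβle, hμle, hsum0, hsumi⟩ := hdata
  have hq01 : q = 0 ∨ q = 1 := by simpa using hq
  set K := ⨆ β' ∈ Finset.range ((∑ i, η i) + q), kappa β' with hKdef
  have hβN : β + 1 ≤ (∑ i, η i) + q := by omega
  have hκK : kappa β ≤ K := kappa_le_biSup (Finset.mem_range.mpr (by omega))
  have hK0 : 0 ≤ K := (kappa_nonneg β).trans hκK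
  set Znat := 2 * (∑ i, η i) + 2 * q - 1 with hZdef
  have hrqZ : r + q ≤ Znat := by omega
  have hzp : (2 * (d:ℝ) + 3) ^ (2 * ((∑ i, η i : ℕ) : ℤ) + 2 * (q : ℤ) - 1)
      = (2 * (d:ℝ) + 3) ^ Znat := by
    rw [show 2 * ((∑ i, η i : ℕ) : ℤ) + 2 * (q : ℤ) - 1 = (Znat : ℤ) from by omega,
      zpow_natCast]
  have hΩ0 : 0 ≤ Ω := by
    rcases hcase with ⟨_, hΩ⟩ | ⟨_, hΩ⟩
    · rw [hΩ]
      split_ifs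
      · norm_num
      · exact one_div_nonneg.mpr ha.le
    · rw [hΩ]
      split_ifs
      · linarith
      · norm_num
  have hpoint : ∀ x ∈ Set.Icc a b, ∀ y : Fin d → ℝ,
      |admFun d S0 R σ T q θ ξ r α β μ x y| ≤
        K * Ω * (2 * (d:ℝ) + 3) ^ Znat /
            (min (σ * tau d T * (2 * (d:ℝ) + 3)) 1) ^ ((∑ i, η i) + q) *
          ∏ i : Fin d, Lam d σ T ((i : ℕ) + 1) ^ η i := by
    intro x hx y
    have hPx : phi d S0 R σ T (Fin.cons (ξ x y) y) = x := hξ x hx y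
    have hax : a ≤ x := hx.1
    have hxb : x ≤ b := hx.2
    have hxpos : 0 < x := lt_of_lt_of_le ha hax
    have hτ := tau_pos (d := d) hT
    have hmin : 0 < min (σ * tau d T * (2 * (d:ℝ) + 3)) 1 := lt_min (by positivity) one_pos
    have hMnn : 0 ≤ K * Ω * (2 * (d:ℝ) + 3) ^ Znat /
        (min (σ * tau d T * (2 * (d:ℝ) + 3)) 1) ^ ((∑ i, η i) + q) *
          ∏ i : Fin d, Lam d σ T ((i : ℕ) + 1) ^ η i := by
      apply mul_nonneg (div_nonneg (mul_nonneg (mul_nonneg hK0 hΩ0) (by positivity))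
        (pow_nonneg hmin.le _))
      exact Finset.prod_nonneg fun i _ => pow_nonneg (Lam_pos hσ hT _).le _
    unfold admFun
    rcases hcase with ⟨hθ, hΩ⟩ | ⟨hθ, hΩ⟩
    · -- θ ≡ 1
      have hθx : θ x = fun _ : Fin (d + 1) → ℝ => (1:ℝ) := funext fun z => hθ x z
      by_cases hμ : μ = 0
      · subst hμ
        simp only [hθx, mderiv_one, Pi.zero_apply, pow_zero, Finset.prod_const_one]
        have hPe : phi d S0 R σ T (Fin.cons (ξ x y) y) ^ 0 /
            phi d S0 R σ T (Fin.cons (ξ x y) y) ^ q ≤ Ω := by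
          rcases hq01 with rfl | rfl
          · simp [hΩ]
          · rw [pow_zero, pow_one, hPx, hΩ]
            simp only [if_neg (one_ne_zero)]
            exact one_div_le_one_div_of_le ha hax
        have hΘ : |(1:ℝ)| ≤ phi d S0 R σ T (Fin.cons (ξ x y) y) ^ 0 *
            ∏ i : Fin (d + 1), Lam d σ T (i : ℕ) ^ (0 : Fin (d+1) → ℕ) i := by
          simp
        simpa using core_bound d S0 R σ T hS0 hσ hT q r α β 0 η hsum0 hsumi K Ω hκK hΩ0
          ((∑ i, η i) + q) Znat hβN hrqZ (Fin.cons (ξ x y) y) (ξ x y) 1 0 hΘ hPe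
      · have hzero : (∏ i, (0:ℝ) ^ μ i) = 0 := by
          obtain ⟨j, hj⟩ := Function.ne_iff.mp hμ
          exact Finset.prod_eq_zero (Finset.mem_univ j) (zero_pow (by simpa using hj))
        simp only [hθx, mderiv_one, hzero, mul_zero, zero_mul, zero_div, abs_zero]
        exact hMnn
    · -- θ = x − φ
      have hθx : θ x = fun z => x - phi d S0 R σ T z := funext fun z => hθ x z
      by_cases hμ : μ = 0
      · subst hμ
        simp only [hθx, mderiv_xsubphi, Pi.zero_apply, pow_zero, Finset.prod_const_one,
          mul_one, mderiv_zero', hPx, sub_self, mul_zero, zero_mul, zero_div, abs_zero]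
        exact hMnn
      · have hzero : (∏ i, (0:ℝ) ^ μ i) = 0 := by
          obtain ⟨j, hj⟩ := Function.ne_iff.mp hμ
          exact Finset.prod_eq_zero (Finset.mem_univ j) (zero_pow (by simpa using hj))
        simp only [hθx, mderiv_xsubphi, hzero, mul_zero, zero_sub]
        have hΘ : |-(mderiv μ (phi d S0 R σ T) (Fin.cons (ξ x y) y))| ≤
            phi d S0 R σ T (Fin.cons (ξ x y) y) ^ 1 *
              ∏ i : Fin (d + 1), Lam d σ T (i : ℕ) ^ μ i := by
          rw [abs_neg, pow_one]
          exact (abs_mderiv_phi_le hS0 hσ hT μ (Fin.cons (ξ x y) y)).trans_eq (mul_comm _ _)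
        have hPe : phi d S0 R σ T (Fin.cons (ξ x y) y) ^ 1 /
            phi d S0 R σ T (Fin.cons (ξ x y) y) ^ q ≤ Ω := by
          rcases hq01 with rfl | rfl
          · rw [pow_zero, pow_one, hPx, hΩ]
            simpa using hxb
          · rw [hΩ, pow_one, div_self (by rw [hPx]; exact hxpos.ne')]
            norm_num
        exact core_bound d S0 R σ T hS0 hσ hT q r α β μ η hsum0 hsumi K Ω hκK hΩ0
          ((∑ i, η i) + q) Znat hβN hrqZ (Fin.cons (ξ x y) y) (ξ x y)
          (-(mderiv μ (phi d S0 R σ T) (Fin.cons (ξ x y) y))) 1 hΘ hPe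
  constructor
  · intro x hx y
    rw [hzp]
    exact hpoint x hx y
  · intro x hx
    rw [hzp]
    exact integral_bound η ψ hψpos hψ1 (fun y => admFun d S0 R σ T q θ ξ r α β μ x y) _
      (hpoint x hx)
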